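/- (Correctness of decryption in the pairing component.) In bilinear groups of prime order q with pairing ê: G × H → G_T, generators g ∈ G, h ∈ H, let s_μ ∈ Z_q for μ ∈ I be shares and γ_μ ∈ Z_q constants with Σ_{μ∈I} γ_μ s_μ = α. Let w, u, v ∈ G, t_μ, r_μ, s ∈ Z_q, and attribute labels A_μ ∈ Z_q. Define sk_{(μ,1)} = g^{s_μ} w^{t_μ}, sk_{(μ,2)} = (u^{A_μ} v)^{-t_μ}, sk_{(μ,3)} = h^{t_μ}, ct_{(0,1)} = h^s, ct_{(μ,1)} = h^{r_μ}, ct_{(μ,2)} = (u^{A_μ} v)^{r_μ} w^{-s}. Then Π_{μ∈I} (ê(sk_{(μ,1)}, ct_{(0,1)}) · ê(sk_{(μ,2)}, ct_{(μ,1)}) · ê(ct_{(μ,2)}, sk_{(μ,3)}))^{γ_μ} = ê(g, h)^{αs}. -/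

import Mathlib

/-!
Expanding each pairing by bilinearity (exponents may be computed in `ZMod q` because `GT` has
exponent `q`), the `μ`-th factor is
`ê(g,h)^{s_μ s} · ê(w,h)^{t_μ s} · ê(X,h)^{-t_μ r_μ} · ê(X,h)^{r_μ t_μ} · ê(w,h)^{-s t_μ}`
with `X = u^{A_μ} v`: the blinding terms cancel in pairs, leaving `ê(g,h)^{s_μ s}`, and raising
to `γ_μ` and multiplying over `I` gives `ê(g,h)^{(Σ γ_μ s_μ) s} = ê(g,h)^{α s}`.
-/

/-- Exponentiation of a group element by an element of `ZMod q`. -/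
def gp {G : Type*} [Monoid G] {q : ℕ} (g : G) (x : ZMod q) : G := g ^ x.val

section Exponent

variable {q : ℕ} {M : Type*}

theorem gp_add [NeZero q] [Monoid M] (hM : ∀ x : M, x ^ q = 1) (x : M) (a b : ZMod q) :
    gp x (a + b) = gp x a * gp x b := by
  rw [gp, gp, gp, ZMod.val_add, ← pow_eq_pow_mod _ (hM x), pow_add]

theorem gp_gp [Monoid M] (hM : ∀ x : M, x ^ q = 1) (x : M) (a b : ZMod q) :
    gp (gp x a) b = gp x (a * b) := by
  rw [gp, gp, gp, ← pow_mul, ZMod.val_mul, ← pow_eq_pow_mod _ (hM x)]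

@[simp]
theorem gp_zero [Monoid M] (x : M) : gp x (0 : ZMod q) = 1 := by
  simp [gp]

theorem gp_mul_gp_eq_one [NeZero q] [Monoid M] (hM : ∀ x : M, x ^ q = 1) (x : M) {a b : ZMod q}
    (hab : a + b = 0) : gp x a * gp x b = 1 := by
  rw [← gp_add hM, hab, gp_zero]

theorem prod_gp [NeZero q] [CommMonoid M] (hM : ∀ x : M, x ^ q = 1) (x : M) {ι : Type*}
    (I : Finset ι) (f : ι → ZMod q) : ∏ i ∈ I, gp x (f i) = gp x (∑ i ∈ I, f i) := by
  classical
  induction I using Finset.induction_on with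
  | empty => simp
  | insert i I hi ih => rw [Finset.prod_insert hi, Finset.sum_insert hi, gp_add hM, ih]

end Exponent

section Pairing

variable {G H GT : Type*} (e : G → H → GT)

theorem pairing_pow_left [Monoid G] [Group GT] (hl : ∀ x x' y, e (x * x') y = e x y * e x' y)
    (x : G) (y : H) (m : ℕ) : e (x ^ m) y = e x y ^ m :=
  (MonoidHom.mk' (e · y) fun x x' => hl x x' y).map_pow x m

theorem pairing_pow_right [Monoid H] [Group GT] (hr : ∀ x y y', e x (y * y') = e x y * e x y')
    (x : G) (y : H) (m : ℕ) : e x (y ^ m) = e x y ^ m :=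
  (MonoidHom.mk' (e x) (hr x)).map_pow y m

theorem pairing_gp_gp {q : ℕ} [Monoid G] [Monoid H] [Group GT] (hGT : ∀ z : GT, z ^ q = 1)
    (hl : ∀ x x' y, e (x * x') y = e x y * e x' y)
    (hr : ∀ x y y', e x (y * y') = e x y * e x y')
    (x : G) (y : H) (a b : ZMod q) : e (gp x a) (gp y b) = gp (e x y) (a * b) := by
  rw [gp, gp, gp, pairing_pow_left e hl, pairing_pow_right e hr, ← pow_mul, Nat.mul_comm,
    ZMod.val_mul, ← pow_eq_pow_mod _ (hGT _)]

theorem decryption_factor_eq {q : ℕ} [NeZero q] [Monoid G] [Monoid H] [CommGroup GT]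
    (hGT : ∀ z : GT, z ^ q = 1)
    (hl : ∀ x x' y, e (x * x') y = e x y * e x' y)
    (hr : ∀ x y y', e x (y * y') = e x y * e x y')
    (g w X : G) (h : H) (σ s t r : ZMod q) :
    e (gp g σ * gp w t) (gp h s) * e (gp X (-t)) (gp h r) * e (gp X r * gp w (-s)) (gp h t)
      = gp (e g h) (σ * s) := by
  simp only [hl, pairing_gp_gp e hGT hl hr]
  have hw : gp (e w h) (t * s) * gp (e w h) (-s * t) = 1 :=
    gp_mul_gp_eq_one hGT _ (by ring)
  have hX : gp (e X h) (-t * r) * gp (e X h) (r * t) = 1 :=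
    gp_mul_gp_eq_one hGT _ (by ring)
  calc _ = gp (e g h) (σ * s) * (gp (e w h) (t * s) * gp (e w h) (-s * t))
        * (gp (e X h) (-t * r) * gp (e X h) (r * t)) := by ac_rfl
    _ = gp (e g h) (σ * s) := by rw [hw, hX, mul_one, mul_one]

end Pairing

theorem stmt9_general {q : ℕ} [Fact q.Prime]
    {G H GT : Type*} [CommGroup G] [CommGroup H] [CommGroup GT]
    (hGT : ∀ x : GT, x ^ q = 1)
    (g : G) (h : H) (e : G → H → GT)
    (hl : ∀ x x' y, e (x * x') y = e x y * e x' y)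
    (hr : ∀ x y y', e x (y * y') = e x y * e x y')
    (n : ℕ) (I : Finset (Fin n))
    (sμ γ t' r' A : Fin n → ZMod q) (α s : ZMod q)
    (w u v : G)
    (hα : ∑ μ ∈ I, γ μ * sμ μ = α) :
    ∏ μ ∈ I,
      gp (e (gp g (sμ μ) * gp w (t' μ)) (gp h s)
          * e (gp (gp u (A μ) * v) (-(t' μ))) (gp h (r' μ))
          * e (gp (gp u (A μ) * v) (r' μ) * gp w (-s)) (gp h (t' μ)))
        (γ μ)
      = gp (e g h) (α * s) := by
  simp only [decryption_factor_eq e hGT hl hr, gp_gp hGT]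
  rw [prod_gp hGT, ← hα, Finset.sum_mul]
  exact congrArg _ (Finset.sum_congr rfl fun μ _ => by ring)

/-- Correctness of decryption in the pairing component:
`Π_{μ∈I} (ê(sk_{(μ,1)}, ct_{(0,1)}) · ê(sk_{(μ,2)}, ct_{(μ,1)}) ·
ê(ct_{(μ,2)}, sk_{(μ,3)}))^{γ_μ} = ê(g,h)^{αs}` when `Σ γ_μ s_μ = α`. -/
theorem stmt9 {q : ℕ} [Fact q.Prime]
    {G H GT : Type*} [CommGroup G] [CommGroup H] [CommGroup GT]
    (hG : ∀ x : G, x ^ q = 1) (hH : ∀ x : H, x ^ q = 1) (hGT : ∀ x : GT, x ^ q = 1)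
    (g : G) (h : H) (e : G → H → GT)
    (hl : ∀ x x' y, e (x * x') y = e x y * e x' y)
    (hr : ∀ x y y', e x (y * y') = e x y * e x y')
    (hbil : ∀ a b : ZMod q, e (gp g a) (gp h b) = gp (e g h) (a * b))
    (n : ℕ) (I : Finset (Fin n))
    (sμ γ t' r' A : Fin n → ZMod q) (α s : ZMod q)
    (w u v : G)
    (hα : ∑ μ ∈ I, γ μ * sμ μ = α) :
    ∏ μ ∈ I,
      gp (e (gp g (sμ μ) * gp w (t' μ)) (gp h s)
          * e (gp (gp u (A μ) * v) (-(t' μ))) (gp h (r' μ))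
          * e (gp (gp u (A μ) * v) (r' μ) * gp w (-s)) (gp h (t' μ)))
        (γ μ)
      = gp (e g h) (α * s) :=
  stmt9_general hGT g h e hl hr n I sμ γ t' r' A α s w u v hα
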